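/- arXiv:2401.04226 — 2 statements merged into one kernel-verified Lean document; each statement's English description precedes it below -/
import Mathlib

section
/- (Claim 1, LARAC multiplier property.) Let V be a finite vertex set with arc set A ⊆ V×V, let c¹, c² : A → ℝ be arc-weight functions, fix s, t ∈ V with at least one s–t path, and let r ∈ ℝ. Define the Lagrangian dual function D(λ) = min over all s–t paths p of (c¹(p) + λ·(c²(p) − r)), and suppose λ* ≥ 0 maximizes D over [0, ∞). Then: (i) if 0 ≤ λ < λ* and p is a λ-minimal s–t path, then c²(p) ≥ r; (ii) if λ > λ* and p is a λ-minimal s–t path, then c²(p) ≤ r. -/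
/-- An s–t path in the directed graph with vertex set `V` and arc set `A ⊆ V × V`:
a nonempty list of arcs of `A`, consecutive arcs sharing endpoints, whose first arc
leaves `s` and whose last arc enters `t`. -/
def IsPath {V : Type*} (A : Set (V × V)) (s t : V) (p : List (V × V)) : Prop :=
  p ≠ [] ∧ (∀ a ∈ p, a ∈ A) ∧ List.Chain' (fun a b => a.2 = b.1) p ∧
    p.head?.map Prod.fst = some s ∧ p.getLast?.map Prod.snd = some t

/-- Cost of a path for the arc-weight function `c`. -/
def cost {V : Type*} (c : V × V → ℝ) (p : List (V × V)) : ℝ := (p.map c).sum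

/-- `p` is a `lam`-minimal s–t path with respect to arc weights `c1, c2`. -/
def IsLagMin {V : Type*} (A : Set (V × V)) (s t : V) (c1 c2 : V × V → ℝ) (lam : ℝ)
    (p : List (V × V)) : Prop :=
  IsPath A s t p ∧ ∀ q, IsPath A s t q →
    cost c1 p + lam * cost c2 p ≤ cost c1 q + lam * cost c2 q

/-- Claim 1 (LARAC multiplier property): if `λ*` maximizes the Lagrangian dual
`D(λ) = min_p (c¹(p) + λ(c²(p) − r))` over `[0, ∞)`, then any `λ`-minimal path with
`0 ≤ λ < λ*` uses at least `r` of resource 2, and any `λ`-minimal path with `λ > λ*`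
uses at most `r` of resource 2. -/
theorem larac_multiplier_property {V : Type*} [Fintype V] (A : Set (V × V))
    (c1 c2 : V × V → ℝ) (s t : V) (r : ℝ)
    (hne : ∃ p, IsPath A s t p)
    (D : ℝ → ℝ)
    (hD : ∀ lam : ℝ,
      IsLeast {x : ℝ | ∃ p, IsPath A s t p ∧ x = cost c1 p + lam * (cost c2 p - r)} (D lam))
    (lamStar : ℝ) (hstar : 0 ≤ lamStar)
    (hmaxD : ∀ lam : ℝ, 0 ≤ lam → D lam ≤ D lamStar) :
    (∀ lam : ℝ, 0 ≤ lam → lam < lamStar →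
        ∀ p, IsLagMin A s t c1 c2 lam p → r ≤ cost c2 p) ∧
    (∀ lam : ℝ, lamStar < lam →
        ∀ p, IsLagMin A s t c1 c2 lam p → cost c2 p ≤ r) := by

  -- If p is lam-minimal, D lam = cost c1 p + lam * (cost c2 p - r)
  have key : ∀ lam p, IsLagMin A s t c1 c2 lam p →
      D lam = cost c1 p + lam * (cost c2 p - r) := by
    intro lam p hp
    obtain ⟨hDmem, hDlb⟩ := hD lam
    have hle : D lam ≤ cost c1 p + lam * (cost c2 p - r) :=
      hDlb ⟨p, hp.1, rfl⟩
    obtain ⟨q, hq, hqeq⟩ := hDmem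
    have := hp.2 q hq
    have hge : cost c1 p + lam * (cost c2 p - r) ≤ D lam := by
      rw [hqeq]; nlinarith
    linarith
  have bound : ∀ lam mu p, IsLagMin A s t c1 c2 lam p →
      D mu ≤ cost c1 p + mu * (cost c2 p - r) := by
    intro lam mu p hp
    exact (hD mu).2 ⟨p, hp.1, rfl⟩
  constructor
  · intro lam hlam hlt p hp
    have h1 := key lam p hp
    have h2 := bound lam lamStar p hp
    have h3 := hmaxD lam hlam
    nlinarith
  · intro lam hlt p hp
    have h1 := key lam p hp
    have h2 := bound lam lamStar p hp
    have h3 := hmaxD lam (le_of_lt (lt_of_le_of_lt hstar hlt))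
    nlinarith
end

section
/- (Up delta-weight: sufficient increase removes an arc from all shortest paths.) Let V be a finite vertex set with arc set A ⊆ V×V and w : A → ℝ an arc-weight function, and let v ∈ V. Let α = (u, d) ∈ A lie on a shortest path from v, i.e., π_w(v, u) + w(α) = π_w(v, d). Suppose there is another arc α' = (u', d) ∈ A with α' ≠ α, and a v→u' path q₀ avoiding α with w(q₀) = π_w(v, u'). Let δ' > π_w(v, u') + w(α') − π_w(v, d), and let w' ≥ w agree with w on all arcs except w'(α) = w(α) + δ'. Then the v→d path obtained by appending α' to q₀ has w'-cost π_w(v, u') + w(α'), and every simple v→d path containing α has w'-cost strictly greater than π_w(v, u') + w(α'). Consequently no w'-shortest simple v→d path contains α. -/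
/-- The list of vertices visited by a walk given as a list of arcs. -/
def verts {V : Type*} : List (V × V) → List V
  | [] => []
  | a :: rest => a.1 :: (a :: rest).map Prod.snd

/-- A walk is a simple path if it visits no vertex twice. -/
def IsSimple {V : Type*} (p : List (V × V)) : Prop := (verts p).Nodup

section walks

variable {V : Type*} {A : Set (V × V)}

/-- Unlike the paths of `IsPath`, walks may be empty, which makes concatenating walks and cutting
out cycles total operations. -/
def IsWalk (A : Set (V × V)) : V → V → List (V × V) → Prop
  | s, t, [] => s = t
  | s, t, a :: p => a ∈ A ∧ a.1 = s ∧ IsWalk A a.2 t p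

namespace IsWalk

variable {s t m : V} {p q c : List (V × V)}

@[simp]
lemma cons_iff {a : V × V} : IsWalk A s t (a :: p) ↔ a ∈ A ∧ a.1 = s ∧ IsWalk A a.2 t p :=
  Iff.rfl

lemma append_iff : IsWalk A s t (p ++ q) ↔ ∃ m, IsWalk A s m p ∧ IsWalk A m t q := by
  induction p generalizing s with
  | nil => simp [IsWalk]
  | cons a p ih => simp [ih, and_assoc]

lemma append (hp : IsWalk A s m p) (hq : IsWalk A m t q) : IsWalk A s t (p ++ q) :=
  append_iff.2 ⟨m, hp, hq⟩

lemma concat (hp : IsWalk A s m p) (ha : (m, t) ∈ A) : IsWalk A s t (p ++ [(m, t)]) :=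
  hp.append ⟨ha, rfl, rfl⟩

lemma flatten_replicate (hc : IsWalk A m m c) (k : ℕ) :
    IsWalk A m m (List.replicate k c).flatten := by
  induction k with
  | zero => rfl
  | succ k ih => simpa [List.replicate_succ] using hc.append ih

lemma mem_map_snd (hp : IsWalk A s t p) (hne : p ≠ []) : t ∈ p.map Prod.snd := by
  induction p generalizing s with
  | nil => exact absurd rfl hne
  | cons a p ih =>
    rcases eq_or_ne p [] with rfl | hp'
    · simp [hp.2.2.symm]
    · exact List.mem_cons_of_mem _ (ih hp.2.2 hp')

lemma verts_eq (hp : IsWalk A s t p) (hne : p ≠ []) : verts p = s :: p.map Prod.snd := by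
  cases p with
  | nil => exact absurd rfl hne
  | cons a p => simp [verts, hp.2.1]

lemma exists_split_of_mem_map_snd {x : V} (hp : IsWalk A s t p) (hx : x ∈ p.map Prod.snd) :
    ∃ c r, p = c ++ r ∧ c ≠ [] ∧ IsWalk A s x c ∧ IsWalk A x t r := by
  induction p generalizing s with
  | nil => simp at hx
  | cons a p ih =>
    obtain ⟨ha, rfl, hp⟩ := hp
    by_cases hxa : x = a.2
    · exact ⟨[a], p, rfl, by simp, ⟨ha, rfl, hxa.symm⟩, hxa ▸ hp⟩
    · obtain ⟨c, r, rfl, -, hc, hr⟩ := ih hp (by simpa [hxa] using hx)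
      exact ⟨a :: c, r, rfl, by simp, ⟨ha, rfl, hc⟩, hr⟩

lemma exists_cycle (hp : IsWalk A s t p) (hdup : ¬ (s :: p.map Prod.snd).Nodup) :
    ∃ r₁ c r₂ m, p = r₁ ++ c ++ r₂ ∧ c ≠ [] ∧
      IsWalk A s m r₁ ∧ IsWalk A m m c ∧ IsWalk A m t r₂ := by
  induction p generalizing s with
  | nil => simp at hdup
  | cons a p ih =>
    by_cases hs : s ∈ (a :: p).map Prod.snd
    · obtain ⟨c, r, hcr, hc, hcw, hrw⟩ := hp.exists_split_of_mem_map_snd hs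
      exact ⟨[], c, r, s, hcr, hc, rfl, hcw, hrw⟩
    · obtain ⟨ha, rfl, hp⟩ := hp
      obtain ⟨r₁, c, r₂, m, rfl, hc, h₁, hcw, h₂⟩ :=
        ih hp fun h => hdup (List.nodup_cons.2 ⟨hs, by simpa using h⟩)
      exact ⟨a :: r₁, c, r₂, m, rfl, hc, ⟨ha, rfl, h₁⟩, hcw, h₂⟩

end IsWalk

set_option linter.deprecated false in
lemma isPath_iff_isWalk {s t : V} {p : List (V × V)} :
    IsPath A s t p ↔ p ≠ [] ∧ IsWalk A s t p := by
  induction p generalizing s with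
  | nil => simp [IsPath]
  | cons a p ih =>
    cases p with
    | nil => simp [IsPath, IsWalk, List.Chain', eq_comm, and_comm]
    | cons b q =>
      have := @ih a.2
      simp only [IsPath, List.Chain', ne_eq, reduceCtorEq, not_false_eq_true, true_and,
        List.mem_cons, forall_eq_or_imp, List.head?_cons, Option.map_some, Option.some.injEq,
        IsWalk.cons_iff, List.isChain_cons_cons, List.getLast?_cons_cons] at this ⊢
      rw [← this]
      grind

lemma IsPath.ne_of_isSimple {s t : V} {p : List (V × V)} (hp : IsPath A s t p)
    (hs : IsSimple p) : s ≠ t := by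
  rintro rfl
  obtain ⟨hne, hw⟩ := isPath_iff_isWalk.1 hp
  rw [IsSimple, hw.verts_eq hne, List.nodup_cons] at hs
  exact hs.1 (hw.mem_map_snd hne)

section cost

variable (w : V × V → ℝ)

lemma cost_append (p q : List (V × V)) : cost w (p ++ q) = cost w p + cost w q := by
  simp [cost]

lemma cost_flatten_replicate (k : ℕ) (c : List (V × V)) :
    cost w (List.replicate k c).flatten = k * cost w c := by
  simp [cost, List.map_flatten, List.sum_flatten]

variable {w}

lemma cost_mono {w' : V × V → ℝ} (h : ∀ a, w a ≤ w' a) (p : List (V × V)) :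
    cost w p ≤ cost w' p :=
  List.sum_le_sum fun a _ => h a

lemma cost_congr {w' : V × V → ℝ} {p : List (V × V)} (h : ∀ a ∈ p, w' a = w a) :
    cost w' p = cost w p := by
  rw [cost, cost, List.map_congr_left h]

lemma cost_add_sub_le_of_mem {w' : V × V → ℝ} (h : ∀ a, w a ≤ w' a) {a : V × V}
    {p : List (V × V)} (ha : a ∈ p) : cost w p + (w' a - w a) ≤ cost w' p := by
  obtain ⟨s, t, rfl⟩ := List.append_of_mem ha
  have hsplit (c : V × V → ℝ) : cost c (s ++ a :: t) = cost c s + c a + cost c t := by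
    simp [cost, add_assoc]
  rw [hsplit, hsplit]
  linarith [cost_mono h s, cost_mono h t]

end cost

section cycles

variable {w : V × V → ℝ} {v d : V} {πd : ℝ}

lemma cost_cycle_nonneg (hlb : ∀ p, IsPath A v d p → πd ≤ cost w p) {m : V}
    {r₁ c r₂ : List (V × V)} (h₁ : IsWalk A v m r₁) (hc : IsWalk A m m c)
    (h₂ : IsWalk A m d r₂) : 0 ≤ cost w c := by
  by_contra! hneg
  have hc_ne : c ≠ [] := by rintro rfl; simp [cost] at hneg
  have hpump (k : ℕ) : πd ≤ cost w r₁ + ((k + 1) * cost w c + cost w r₂) := by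
    have hk := hlb (r₁ ++ (List.replicate (k + 1) c).flatten ++ r₂) <|
      isPath_iff_isWalk.2 ⟨by simp [hc_ne], (h₁.append (hc.flatten_replicate _)).append h₂⟩
    simpa [cost_append, cost_flatten_replicate] using hk
  obtain ⟨k, hk⟩ := exists_nat_gt ((cost w r₁ + cost w r₂ - πd) / -cost w c)
  rw [div_lt_iff₀ (by linarith)] at hk
  linarith [hpump k]

lemma exists_simple_subpath (hvd : v ≠ d) (hlb : ∀ p, IsPath A v d p → πd ≤ cost w p)
    {r : List (V × V)} (hr : IsWalk A v d r) :
    ∃ r', IsPath A v d r' ∧ IsSimple r' ∧ r' ⊆ r ∧ cost w r' ≤ cost w r := by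
  induction hlen : r.length using Nat.strong_induction_on generalizing r with
  | _ n ih =>
    have hne : r ≠ [] := by rintro rfl; exact hvd hr
    by_cases hs : IsSimple r
    · exact ⟨r, isPath_iff_isWalk.2 ⟨hne, hr⟩, hs, List.Subset.refl _, le_rfl⟩
    rw [IsSimple, hr.verts_eq hne] at hs
    obtain ⟨r₁, c, r₂, m, rfl, hc, h₁, hcw, h₂⟩ := hr.exists_cycle hs
    have hcut_len : (r₁ ++ r₂).length < n := by
      simp only [← hlen, List.length_append]
      have := List.length_pos_iff.2 hc
      omega
    obtain ⟨r', hr', hr's, hsub, hcost⟩ := ih _ hcut_len (h₁.append h₂) rfl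
    refine ⟨r', hr', hr's, fun a ha => ?_, ?_⟩
    · rcases List.mem_append.1 (hsub ha) with h | h <;> simp [h]
    · have hc_nonneg := cost_cycle_nonneg hlb h₁ hcw h₂
      simp only [cost_append] at hcost ⊢
      linarith

end cycles

end walks

theorem up_delta_sufficient_general {V : Type*}
    (A : Set (V × V)) (w : V × V → ℝ) (v u d u' : V)
    (hα' : (u', d) ∈ A) (hαne : (u', d) ≠ (u, d))
    (πd πu' : ℝ)
    (hπd : IsLeast {x : ℝ | ∃ p, IsPath A v d p ∧ x = cost w p} πd)
    (q0 : List (V × V)) (hq0 : IsPath A v u' q0) (hq0avoid : (u, d) ∉ q0)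
    (hq0cost : cost w q0 = πu')
    (δ' : ℝ) (hδ : πu' + w (u', d) - πd < δ')
    (w' : V × V → ℝ) (hw'ge : ∀ a, w a ≤ w' a)
    (hw'eq : ∀ a, a ≠ (u, d) → w' a = w a)
    (hw'α : w' (u, d) = w (u, d) + δ') :
    cost w' (q0 ++ [(u', d)]) = πu' + w (u', d) ∧
    (∀ p, IsPath A v d p → IsSimple p → (u, d) ∈ p →
        πu' + w (u', d) < cost w' p) ∧
    (∀ p, IsPath A v d p → IsSimple p →
        (∀ q, IsPath A v d q → IsSimple q → cost w' p ≤ cost w' q) → (u, d) ∉ p) := by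
  have hlb : ∀ p, IsPath A v d p → πd ≤ cost w p := fun p hp => hπd.2 ⟨p, hp, rfl⟩
  set q := q0 ++ [(u', d)]
  have hq : IsWalk A v d q := (isPath_iff_isWalk.1 hq0).2.concat hα'
  have hq_avoid : (u, d) ∉ q := by simp [q, hq0avoid, hαne.symm]
  have hw'_eq_on_q (r : List (V × V)) (hr : r ⊆ q) : cost w' r = cost w r :=
    cost_congr fun a ha => hw'eq a (ne_of_mem_of_not_mem (hr ha) hq_avoid)
  have hq_cost : cost w q = πu' + w (u', d) := by simp [q, ← hq0cost, cost]
  have hthrough (p) (hp : IsPath A v d p) (hm : (u, d) ∈ p) : πu' + w (u', d) < cost w' p :=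
    calc πu' + w (u', d) < πd + (w' (u, d) - w (u, d)) := by rw [hw'α]; linarith
      _ ≤ cost w p + (w' (u, d) - w (u, d)) := by linarith [hlb p hp]
      _ ≤ cost w' p := cost_add_sub_le_of_mem hw'ge hm
  refine ⟨(hw'_eq_on_q q (List.Subset.refl q)).trans hq_cost, fun p hp _ => hthrough p hp, ?_⟩
  intro p hp hs hmin hm
  obtain ⟨r, hr, hrs, hrq, hr_cost⟩ := exists_simple_subpath (hp.ne_of_isSimple hs) hlb hq
  linarith [hmin r hr hrs, hthrough p hp hm, hw'_eq_on_q r hrq]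

/-- Up delta-weight, sufficient increase: increasing the weight of arc `α = (u, d)` (lying on
a shortest path from `v`) by `δ'` strictly larger than `π_w(v,u') + w(α') − π_w(v,d)`, where
`α' = (u', d)` is another arc into `d` reached by a shortest `v→u'` path `q₀` avoiding `α`,
makes the path `q₀ ++ [α']` cost `π_w(v,u') + w(α')` while every simple `v→d` path through
`α` costs strictly more; hence no shortest simple `v→d` path for the new weights contains `α`. -/
theorem up_delta_sufficient {V : Type*} [Fintype V] [DecidableEq V]
    (A : Set (V × V)) (w : V × V → ℝ) (v u d u' : V)
    (hα : (u, d) ∈ A) (hα' : (u', d) ∈ A) (hαne : (u', d) ≠ (u, d))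
    (πu πd πu' : ℝ)
    (hπu : IsLeast {x : ℝ | ∃ p, IsPath A v u p ∧ x = cost w p} πu)
    (hπd : IsLeast {x : ℝ | ∃ p, IsPath A v d p ∧ x = cost w p} πd)
    (hπu' : IsLeast {x : ℝ | ∃ p, IsPath A v u' p ∧ x = cost w p} πu')
    (hon : πu + w (u, d) = πd)
    (q0 : List (V × V)) (hq0 : IsPath A v u' q0) (hq0avoid : (u, d) ∉ q0)
    (hq0cost : cost w q0 = πu')
    (δ' : ℝ) (hδ : πu' + w (u', d) - πd < δ')
    (w' : V × V → ℝ) (hw'ge : ∀ a, w a ≤ w' a)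
    (hw'eq : ∀ a, a ≠ (u, d) → w' a = w a)
    (hw'α : w' (u, d) = w (u, d) + δ') :
    cost w' (q0 ++ [(u', d)]) = πu' + w (u', d) ∧
    (∀ p, IsPath A v d p → IsSimple p → (u, d) ∈ p →
        πu' + w (u', d) < cost w' p) ∧
    (∀ p, IsPath A v d p → IsSimple p →
        (∀ q, IsPath A v d q → IsSimple q → cost w' p ≤ cost w' q) → (u, d) ∉ p) :=
  up_delta_sufficient_general A w v u d u' hα' hαne πd πu' hπd q0 hq0 hq0avoid hq0cost δ' hδ w'
    hw'ge hw'eq hw'α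
end
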